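/- Let Q ∈ SO(3) and let ψ₁ be a real number with 0 ≤ ψ₁ ≤ 1. If Ψ(Q) = trace(I − Q)/2 satisfies Ψ(Q) ≤ ψ₁, then the attitude error vector e(Q), with components e(Q)₁ = (Q₃₂ − Q₂₃)/2, e(Q)₂ = (Q₁₃ − Q₃₁)/2, e(Q)₃ = (Q₂₁ − Q₁₂)/2, satisfies ‖e(Q)‖ ≤ √(ψ₁(2 − ψ₁)). -/

import Mathlib

/-!
For a rotation `Q` we have `adj Q = Qᵀ`, so each diagonal entry of `Q` equals its complementary
`2 × 2` minor. Together with `∑ Q_ij² = 3` this gives `4‖e(Q)‖² = (1 + tr Q)(3 - tr Q)`, that is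
`‖e(Q)‖² = Ψ(2 - Ψ)`, and `x ↦ x(2 - x)` is increasing on `x ≤ 1`.
-/

open scoped Matrix

namespace Matrix

variable {R : Type*} [CommRing R]

theorem adjugate_eq_transpose_of_transpose_mul_self_eq_one {n : Type*} [Fintype n] [DecidableEq n]
    {Q : Matrix n n R} (hQ : Qᵀ * Q = 1) (hdet : Q.det = 1) : Q.adjugate = Qᵀ :=
  left_inv_eq_left_inv (by rw [adjugate_mul, hdet, one_smul]) hQ

theorem diag_eq_cofactor_of_transpose_mul_self_eq_one {Q : Matrix (Fin 3) (Fin 3) R}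
    (hQ : Qᵀ * Q = 1) (hdet : Q.det = 1) :
    Q 0 0 = Q 1 1 * Q 2 2 - Q 1 2 * Q 2 1 ∧ Q 1 1 = Q 0 0 * Q 2 2 - Q 0 2 * Q 2 0 ∧
      Q 2 2 = Q 0 0 * Q 1 1 - Q 0 1 * Q 1 0 := by
  have h := (adjugate_eq_transpose_of_transpose_mul_self_eq_one hQ hdet).symm.trans
    (adjugate_fin_three Q)
  exact ⟨by simpa using congrFun₂ h 0 0, by simpa using congrFun₂ h 1 1,
    by simpa using congrFun₂ h 2 2⟩

theorem sum_sq_entries_of_transpose_mul_self_eq_one {n : Type*} [Fintype n] [DecidableEq n]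
    {Q : Matrix n n R} (hQ : Qᵀ * Q = 1) : ∑ i, ∑ j, Q i j ^ 2 = Fintype.card n := by
  calc ∑ i, ∑ j, Q i j ^ 2 = trace (Qᵀ * Q) := by
        rw [Finset.sum_comm]; simp only [trace, diag_apply, mul_apply, transpose_apply, sq]
    _ = Fintype.card n := by rw [hQ, trace_one]

theorem skew_sq_sum_eq_of_transpose_mul_self_eq_one {Q : Matrix (Fin 3) (Fin 3) R}
    (hQ : Qᵀ * Q = 1) (hdet : Q.det = 1) :
    (Q 2 1 - Q 1 2) ^ 2 + (Q 0 2 - Q 2 0) ^ 2 + (Q 1 0 - Q 0 1) ^ 2 =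
      (1 + Q.trace) * (3 - Q.trace) := by
  obtain ⟨c0, c1, c2⟩ := diag_eq_cofactor_of_transpose_mul_self_eq_one hQ hdet
  have h3 := sum_sq_entries_of_transpose_mul_self_eq_one hQ
  simp only [Fin.sum_univ_three, Fintype.card_fin, Nat.cast_ofNat] at h3
  rw [trace_fin_three]
  linear_combination h3 - 2 * c0 - 2 * c1 - 2 * c2

end Matrix

theorem mul_two_sub_le_mul_two_sub {α : Type*} [CommRing α] [LinearOrder α] [IsStrictOrderedRing α]
    {x y : α} (hxy : x ≤ y) (hy : y ≤ 1) : x * (2 - x) ≤ y * (2 - y) := by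
  nlinarith

theorem EuclideanSpace.norm_toLp_fin_three (a b c : ℝ) :
    ‖(WithLp.equiv 2 (Fin 3 → ℝ)).symm ![a, b, c]‖ = √(a ^ 2 + b ^ 2 + c ^ 2) := by
  simp [EuclideanSpace.norm_eq, Fin.sum_univ_three]

theorem attitude_error_norm_le_general (Q : Matrix (Fin 3) (Fin 3) ℝ)
    (hQ : Qᵀ * Q = 1) (hdet : Q.det = 1)
    (ψ₁ : ℝ) (hψ₁1 : ψ₁ ≤ 1)
    (hΨ : Matrix.trace (1 - Q) / 2 ≤ ψ₁) :
    ‖(WithLp.equiv 2 (Fin 3 → ℝ)).symm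
        ![(Q 2 1 - Q 1 2) / 2, (Q 0 2 - Q 2 0) / 2, (Q 1 0 - Q 0 1) / 2]‖
      ≤ Real.sqrt (ψ₁ * (2 - ψ₁)) := by
  set Ψ := Matrix.trace (1 - Q) / 2 with hΨ_def
  have htrace : Q.trace = 3 - 2 * Ψ := by
    rw [hΨ_def, Matrix.trace_sub, Matrix.trace_one, Fintype.card_fin]
    push_cast
    ring
  have herror_sq : ((Q 2 1 - Q 1 2) / 2) ^ 2 + ((Q 0 2 - Q 2 0) / 2) ^ 2
      + ((Q 1 0 - Q 0 1) / 2) ^ 2 = Ψ * (2 - Ψ) := by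
    have hskew := Matrix.skew_sq_sum_eq_of_transpose_mul_self_eq_one hQ hdet
    rw [htrace] at hskew
    linear_combination (1 / 4 : ℝ) * hskew
  rw [EuclideanSpace.norm_toLp_fin_three, herror_sq]
  exact Real.sqrt_le_sqrt (mul_two_sub_le_mul_two_sub hΨ hψ₁1)

/-- for `Q ∈ SO(3)` and `0 ≤ ψ₁ ≤ 1`, if `Ψ(Q) = trace(I − Q)/2 ≤ ψ₁`
then the attitude error vector `e(Q) = ((Q − Qᵀ)^∨)/2` satisfies
`‖e(Q)‖ ≤ √(ψ₁(2 − ψ₁))` (Euclidean norm on ℝ³). -/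
theorem attitude_error_norm_le (Q : Matrix (Fin 3) (Fin 3) ℝ)
    (hQ : Qᵀ * Q = 1) (hdet : Q.det = 1)
    (ψ₁ : ℝ) (hψ₁0 : 0 ≤ ψ₁) (hψ₁1 : ψ₁ ≤ 1)
    (hΨ : Matrix.trace (1 - Q) / 2 ≤ ψ₁) :
    ‖(WithLp.equiv 2 (Fin 3 → ℝ)).symm
        ![(Q 2 1 - Q 1 2) / 2, (Q 0 2 - Q 2 0) / 2, (Q 1 0 - Q 0 1) / 2]‖
      ≤ Real.sqrt (ψ₁ * (2 - ψ₁)) :=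
  attitude_error_norm_le_general Q hQ hdet ψ₁ hψ₁1 hΨ
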